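/- Let G be a 2-homogeneous but not 2-transitive permutation group on an infinite set X. Then there is a G-invariant tournament on X whose arc set is one of the two G-orbits on ordered pairs of distinct elements, and G acts locally rigidly on X. -/

import Mathlib

def IsTournament {X : Type*} (r : X → X → Prop) : Prop :=
  (∀ x, ¬ r x x) ∧ ∀ x y : X, x ≠ y → (r x y ↔ ¬ r y x)

/-!
The tournament is the `G`-orbit of one ordered pair: an element of `G` reversing an arc would,
with 2-homogeneity, make `G` 2-transitive. As `G` is transitive on arcs, every interval
`{w | x → w → y}` contains a copy of the interior of an arbitrarily long transitive
subtournament; these exist in any infinite tournament by pigeonholing, so intervals are infinite.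

For local rigidity, stack finite transitive blocks `T 0, T 1, …` on top of `U`, one inside the
interval of each arc of `U`, each unsplit by and larger than everything below it. A point below
block `c` gains `0` or `#(T c)` from it, so its out-degree in the whole tower `V` determines on
which side of each higher block it lies. An automorphism of `V` preserves out-degrees. Going down
the blocks, a moved point of `T c` (whose points have distinct out-degrees) would be the image of
a point below `T c` and be sent to one, both on the same side of `T c`, and an arc would be
reversed. Finally two points of `U` are separated by the block inside the interval of their arc.
-/

open Finset

section

open scoped Classical

variable {X : Type*} {r : X → X → Prop}

def TransOn (r : X → X → Prop) (s : Set X) : Prop :=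
  ∀ ⦃x⦄, x ∈ s → ∀ ⦃y⦄, y ∈ s → ∀ ⦃z⦄, z ∈ s → r x y → r y z → r x z

def Unsplit (r : X → X → Prop) (W T : Set X) : Prop :=
  ∀ w ∈ W, (∀ e ∈ T, r w e) ∨ (∀ e ∈ T, r e w)

theorem Unsplit.mono {W T W' T' : Set X} (h : Unsplit r W T) (hW : W' ⊆ W) (hT : T' ⊆ T) :
    Unsplit r W' T' :=
  fun w hw => (h w (hW hw)).imp (fun h e he => h e (hT he)) (fun h e he => h e (hT he))

namespace IsTournament

theorem asymm (hr : IsTournament r) {x y : X} (h : r x y) : ¬ r y x := by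
  rcases eq_or_ne x y with rfl | hne
  · exact hr.1 x
  · exact (hr.2 x y hne).1 h

theorem total (hr : IsTournament r) {x y : X} (h : x ≠ y) : r x y ∨ r y x := by
  by_contra! h'
  exact h'.1 ((hr.2 x y h).2 h'.2)

theorem nodup_of_pairwise (hr : IsTournament r) {l : List X} (hl : l.Pairwise r) : l.Nodup :=
  hl.imp fun {a b} (h : r a b) (heq : a = b) => hr.1 b (heq ▸ h)

theorem infinite_out_or_infinite_in (hr : IsTournament r) {S : Set X} (hS : S.Infinite) (p : X) :
    {w ∈ S | r p w}.Infinite ∨ {w ∈ S | r w p}.Infinite := by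
  refine Set.infinite_union.1 ((hS.sdiff (Set.finite_singleton p)).mono ?_)
  rintro w ⟨hwS, hwp⟩
  exact (hr.total (Ne.symm hwp)).imp (⟨hwS, ·⟩) (⟨hwS, ·⟩)

theorem exists_pairwise (hr : IsTournament r) :
    ∀ (n : ℕ) {S : Set X}, S.Infinite → ∃ l : List X, l.length = n ∧ l.Pairwise r ∧ ∀ x ∈ l, x ∈ S
  | 0, _, _ => ⟨[], rfl, .nil, by simp⟩
  | n + 1, S, hS => by
    obtain ⟨p, hp⟩ := hS.nonempty
    rcases hr.infinite_out_or_infinite_in hS p with hout | hin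
    · obtain ⟨l, hlen, hl, hlS⟩ := hr.exists_pairwise n hout
      refine ⟨p :: l, by simp [hlen], List.pairwise_cons.2 ⟨fun x hx => (hlS x hx).2, hl⟩, ?_⟩
      simpa [hp] using fun x hx => (hlS x hx).1
    · obtain ⟨l, hlen, hl, hlS⟩ := hr.exists_pairwise n hin
      refine ⟨l ++ [p], by simp [hlen], List.pairwise_append.2 ⟨hl, by simp, ?_⟩, ?_⟩
      · simpa using fun x hx => (hlS x hx).2
      · simpa [hp, or_imp, forall_and] using fun x hx => (hlS x hx).1

theorem lt_of_rel_getElem (hr : IsTournament r) {l : List X} (hl : l.Pairwise r) {i j : ℕ}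
    (hi : i < l.length) (hj : j < l.length) (h : r l[i] l[j]) : i < j := by
  by_contra! hji
  rcases hji.lt_or_eq with hji | rfl
  · exact hr.asymm h (List.pairwise_iff_getElem.1 hl j i hj hi hji)
  · exact hr.1 _ h

theorem transOn_of_pairwise (hr : IsTournament r) {l : List X} (hl : l.Pairwise r) :
    TransOn r {x | x ∈ l} := by
  intro x hx y hy z hz hxy hyz
  obtain ⟨i, hi, rfl⟩ := List.mem_iff_getElem.1 hx
  obtain ⟨j, hj, rfl⟩ := List.mem_iff_getElem.1 hy
  obtain ⟨k, hk, rfl⟩ := List.mem_iff_getElem.1 hz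
  exact List.pairwise_iff_getElem.1 hl i k hi hk
    ((hr.lt_of_rel_getElem hl hi hj hxy).trans (hr.lt_of_rel_getElem hl hj hk hyz))

theorem exists_unsplit [DecidableEq X] (hr : IsTournament r) (W : Finset X) {S : Set X}
    (hS : S.Infinite) : ∃ S' ⊆ S, S'.Infinite ∧ Unsplit r W S' := by
  induction W using Finset.induction_on with
  | empty => exact ⟨S, subset_rfl, hS, by simp [Unsplit]⟩
  | insert p W _ ih =>
    obtain ⟨S', hS'S, hS', hW⟩ := ih
    rcases hr.infinite_out_or_infinite_in hS' p with h | h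
    · refine ⟨_, fun x hx => hS'S hx.1, h, ?_⟩
      rw [coe_insert]
      rintro w (rfl | hw)
      · exact Or.inl fun e he => he.2
      · exact hW.mono subset_rfl (fun e he => he.1) w hw
    · refine ⟨_, fun x hx => hS'S hx.1, h, ?_⟩
      rw [coe_insert]
      rintro w (rfl | hw)
      · exact Or.inr fun e he => he.2
      · exact hW.mono subset_rfl (fun e he => he.1) w hw

theorem exists_large_transOn_unsplit [DecidableEq X] (hr : IsTournament r) {S : Set X}
    (hS : S.Infinite) (W : Finset X) :
    ∃ B : Finset X, ↑B ⊆ S ∧ Disjoint W B ∧ #W < #B ∧ Unsplit r W B ∧ TransOn r B := by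
  obtain ⟨S', hS'S, hS', hunsplit⟩ := hr.exists_unsplit W (hS.sdiff W.finite_toSet)
  obtain ⟨l, hlen, hl, hlS'⟩ := hr.exists_pairwise (#W + 1) hS'
  have hlS : ∀ x ∈ l.toFinset, x ∈ S \ W := fun x hx => hS'S (hlS' x (List.mem_toFinset.1 hx))
  refine ⟨l.toFinset, fun x hx => (hlS x hx).1,
    disjoint_right.2 fun x hx => (hlS x hx).2, ?_,
    hunsplit.mono subset_rfl fun x hx => hlS' x (List.mem_toFinset.1 hx), ?_⟩
  · rw [List.card_toFinset, (hr.nodup_of_pairwise hl).dedup, hlen]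
    exact Nat.lt_succ_self _
  · rw [List.coe_toFinset]
    exact hr.transOn_of_pairwise hl

end IsTournament

noncomputable def outDegree (r : X → X → Prop) (T : Finset X) (x : X) : ℕ := #{y ∈ T | r x y}

theorem outDegree_le_card (T : Finset X) (x : X) : outDegree r T x ≤ #T :=
  card_filter_le _ _

theorem outDegree_union [DecidableEq X] {A B : Finset X} (h : Disjoint A B) (x : X) :
    outDegree r (A ∪ B) x = outDegree r A x + outDegree r B x := by
  rw [outDegree, filter_union, card_union_of_disjoint (disjoint_filter_filter h)]; rfl

theorem outDegree_apply_eq [DecidableEq X] {g : Equiv.Perm X} (hg : ∀ x y, r (g x) (g y) ↔ r x y)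
    {T : Finset X} (hT : T.image g = T) (x : X) : outDegree r T (g x) = outDegree r T x := by
  conv_lhs => rw [outDegree, ← hT, filter_image]
  simp_rw [hg]
  exact card_image_of_injective _ g.injective

theorem outDegree_eq_zero_or_card (hr : IsTournament r) {W T : Finset X}
    (hU : Unsplit r W T) {w : X} (hw : w ∈ W) : outDegree r T w = 0 ∨ outDegree r T w = #T :=
  (hU w hw).symm.imp (fun h => card_filter_eq_zero_iff.2 fun e he => hr.asymm (h e he))
    card_filter_eq_iff.2

theorem rel_iff_outDegree_eq_card (hr : IsTournament r) {W T : Finset X}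
    (hU : Unsplit r W T) {w e : X} (hw : w ∈ W) (he : e ∈ T) :
    r w e ↔ outDegree r T w = #T := by
  rw [outDegree, card_filter_eq_iff]
  refine ⟨fun h => (hU w hw).resolve_right fun h' => hr.asymm h (h' e he), fun h => h e he⟩

theorem outDegree_eq_of_unsplit (hr : IsTournament r) {W T : Finset X} (hU : Unsplit r W T)
    {x y : X} (hx : x ∈ T) (hy : y ∈ T) : outDegree r W x = outDegree r W y := by
  refine congrArg card (filter_congr fun w hw => ?_)
  rcases hU w hw with h | h
  · exact iff_of_false (hr.asymm (h x hx)) (hr.asymm (h y hy))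
  · exact iff_of_true (h x hx) (h y hy)

theorem outDegree_lt_of_rel (hr : IsTournament r) {T : Finset X} (hT : TransOn r T) {x y : X}
    (hx : x ∈ T) (hy : y ∈ T) (h : r x y) : outDegree r T y < outDegree r T x := by
  refine card_lt_card ((ssubset_iff_of_subset fun z hz => ?_).2 ⟨y, ?_, ?_⟩)
  · rw [mem_filter] at hz ⊢
    exact ⟨hz.1, hT hx hy hz.1 h hz.2⟩
  · exact mem_filter.2 ⟨hy, h⟩
  · exact fun hyy => hr.1 y (mem_filter.1 hyy).2

theorem eq_of_outDegree_eq (hr : IsTournament r) {T : Finset X} (hT : TransOn r T) {x y : X}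
    (hx : x ∈ T) (hy : y ∈ T) (h : outDegree r T x = outDegree r T y) : x = y := by
  by_contra hne
  rcases hr.total hne with hxy | hyx
  · exact (outDegree_lt_of_rel hr hT hx hy hxy).ne' h
  · exact (outDegree_lt_of_rel hr hT hy hx hyx).ne h

section Tower

variable [DecidableEq X] {U : Finset X} {T : ℕ → Finset X} {n c : ℕ}

def stage (U : Finset X) (T : ℕ → Finset X) (c : ℕ) : Finset X := U ∪ (range c).biUnion T

theorem stage_zero : stage U T 0 = U := by simp [stage]

theorem stage_succ : stage U T (c + 1) = stage U T c ∪ T c := by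
  simp only [stage, range_add_one, biUnion_insert]
  rw [union_left_comm, union_comm (T c), union_assoc]

theorem subset_stage : U ⊆ stage U T c := subset_union_left

theorem subset_stage_succ : T c ⊆ stage U T (c + 1) := by
  rw [stage_succ]
  exact subset_union_right

theorem stage_mono : Monotone (stage U T) := fun _ _ h =>
  union_subset_union_right (biUnion_subset_biUnion_of_subset_left _ (range_mono h))

theorem stage_update (B : Finset X) (hc : c ≤ n) :
    stage U (Function.update T n B) c = stage U T c :=
  congrArg (U ∪ ·) (biUnion_congr rfl fun i hi =>
    Function.update_of_ne (by rw [mem_range] at hi; omega) _ _)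

structure IsTower (r : X → X → Prop) (U : Finset X) (T : ℕ → Finset X) (n : ℕ) : Prop where
  disjoint : ∀ c < n, Disjoint (stage U T c) (T c)
  card_lt : ∀ c < n, #(stage U T c) < #(T c)
  unsplit : ∀ c < n, Unsplit r (stage U T c) (T c)
  transOn : ∀ c < n, TransOn r (T c)

namespace IsTower

theorem extend (hT : IsTower r U T n) {B : Finset X} (hdisj : Disjoint (stage U T n) B)
    (hcard : #(stage U T n) < #B) (hunsplit : Unsplit r (stage U T n) B) (htrans : TransOn r B) :
    IsTower r U (Function.update T n B) (n + 1) := by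
  have cases : ∀ c < n + 1, (stage U (Function.update T n B) c = stage U T n ∧
      Function.update T n B c = B) ∨ (c < n ∧ stage U (Function.update T n B) c = stage U T c ∧
      Function.update T n B c = T c) := by
    intro c hc
    rw [stage_update B (Nat.lt_succ_iff.1 hc)]
    rcases (Nat.lt_succ_iff.1 hc).lt_or_eq with hc | rfl
    · exact Or.inr ⟨hc, rfl, Function.update_of_ne hc.ne _ _⟩
    · exact Or.inl ⟨rfl, Function.update_self _ _ _⟩
  constructor <;> intro c hc <;> rcases cases c hc with ⟨h1, h2⟩ | ⟨hc, h1, h2⟩ <;>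
    simp only [h1, h2]
  exacts [hdisj, hT.disjoint c hc, hcard, hT.card_lt c hc, hunsplit, hT.unsplit c hc, htrans,
    hT.transOn c hc]

theorem outDegree_stage_succ (hT : IsTower r U T n) (hc : c < n) (x : X) :
    outDegree r (stage U T (c + 1)) x = outDegree r (stage U T c) x + outDegree r (T c) x := by
  rw [stage_succ, outDegree_union (hT.disjoint c hc)]

-- Below stage `c`, block `c` adds `0` or `#(T c)` to an out-degree, and `#(T c)` exceeds every
-- out-degree into stage `c`: the out-degree into the top stage is read off block by block.
theorem outDegree_stage_eq (hT : IsTower r U T n) (hr : IsTournament r) (hc : c ≤ n) {x y : X}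
    (hx : x ∈ stage U T c) (hy : y ∈ stage U T c)
    (h : outDegree r (stage U T n) x = outDegree r (stage U T n) y) :
    outDegree r (stage U T c) x = outDegree r (stage U T c) y := by
  induction hc using Nat.decreasingInduction with
  | self => exact h
  | of_succ c hc ih =>
    have hsucc := ih (stage_mono c.le_succ hx) (stage_mono c.le_succ hy)
    rw [hT.outDegree_stage_succ hc, hT.outDegree_stage_succ hc] at hsucc
    have := hT.card_lt c hc
    have := outDegree_le_card (r := r) (stage U T c) x
    have := outDegree_le_card (r := r) (stage U T c) y
    rcases outDegree_eq_zero_or_card hr (hT.unsplit c hc) hx with hx' | hx' <;>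
    rcases outDegree_eq_zero_or_card hr (hT.unsplit c hc) hy with hy' | hy' <;>
    omega

theorem rel_iff_of_outDegree_eq (hT : IsTower r U T n) (hr : IsTournament r) (hc : c < n)
    {x y e : X} (hx : x ∈ stage U T c) (hy : y ∈ stage U T c) (he : e ∈ T c)
    (h : outDegree r (stage U T n) x = outDegree r (stage U T n) y) : r x e ↔ r y e := by
  have hsucc := hT.outDegree_stage_eq hr hc (stage_mono c.le_succ hx) (stage_mono c.le_succ hy) h
  rw [hT.outDegree_stage_succ hc, hT.outDegree_stage_succ hc,
    hT.outDegree_stage_eq hr hc.le hx hy h, Nat.add_left_cancel_iff] at hsucc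
  rw [rel_iff_outDegree_eq_card hr (hT.unsplit c hc) hx he,
    rel_iff_outDegree_eq_card hr (hT.unsplit c hc) hy he, hsucc]

theorem eq_of_outDegree_eq (hT : IsTower r U T n) (hr : IsTournament r) (hc : c < n)
    {x y : X} (hx : x ∈ T c) (hy : y ∈ T c)
    (h : outDegree r (stage U T n) x = outDegree r (stage U T n) y) : x = y := by
  have hsucc := hT.outDegree_stage_eq hr hc (subset_stage_succ hx) (subset_stage_succ hy) h
  rw [hT.outDegree_stage_succ hc, hT.outDegree_stage_succ hc,
    outDegree_eq_of_unsplit hr (hT.unsplit c hc) hx hy, Nat.add_left_cancel_iff] at hsucc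
  exact _root_.eq_of_outDegree_eq hr (hT.transOn c hc) hx hy hsucc

theorem apply_eq_self_of_notMem_stage (hT : IsTower r U T n) (hr : IsTournament r)
    {g : Equiv.Perm X} (hg : ∀ x y, r (g x) (g y) ↔ r x y)
    (hV : (stage U T n).image g = stage U T n) (hc : c ≤ n) :
    ∀ x ∈ stage U T n, x ∉ stage U T c → g x = x := by
  induction hc using Nat.decreasingInduction with
  | self => exact fun x hx hx' => absurd hx hx'
  | of_succ c hc ih =>
    intro x hxV hxc
    by_contra hne
    have hx : x ∈ stage U T (c + 1) := by_contra fun h => hne (ih x hxV h)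
    have hxT : x ∈ T c := by
      rw [stage_succ, mem_union] at hx
      exact hx.resolve_left hxc
    have hscore := outDegree_apply_eq hg hV
    have hgxV : g x ∈ stage U T n := hV ▸ mem_image_of_mem g hxV
    obtain ⟨y, hyV, rfl⟩ : ∃ y ∈ stage U T n, g y = x := mem_image.1 (hV.symm ▸ hxV)
    have hgx : g (g y) ∈ stage U T (c + 1) := by
      by_contra h
      rw [g.injective (ih _ hgxV h)] at h
      exact h hx
    have hy : y ∈ stage U T (c + 1) := by
      by_contra h
      rw [ih y hyV h] at hx
      exact h hx
    rw [stage_succ, mem_union] at hgx hy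
    rcases hgx with hgx | hgx
    · rcases hy with hy | hy
      · -- `y` and `g (g y)` are on the same side of `g y`, so `g` reverses an arc
        have key := hT.rel_iff_of_outDegree_eq hr hc hgx hy hxT (by rw [hscore, hscore])
        rw [← hg y] at key
        exact iff_not_self (key.trans (hr.2 _ _ (Ne.symm hne)))
      · exact hne (congrArg g (hT.eq_of_outDegree_eq hr hc hxT hy (hscore y)))
    · exact hne (hT.eq_of_outDegree_eq hr hc hgx hxT (hscore _))

theorem apply_eq_self (hT : IsTower r U T n) (hr : IsTournament r)
    (hsep : ∀ p ∈ U, ∀ q ∈ U, r p q → ∃ c < n, ∃ e ∈ T c, r p e ∧ r e q)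
    {g : Equiv.Perm X} (hg : ∀ x y, r (g x) (g y) ↔ r x y)
    (hV : (stage U T n).image g = stage U T n) : ∀ x ∈ stage U T n, g x = x := by
  have hfix := hT.apply_eq_self_of_notMem_stage hr hg hV n.zero_le
  rw [stage_zero] at hfix
  have hscore := outDegree_apply_eq hg hV
  have hsep' : ∀ p ∈ U, ∀ q ∈ U, outDegree r (stage U T n) p = outDegree r (stage U T n) q →
      ¬ r p q := by
    intro p hp q hq hpq hpq'
    obtain ⟨c, hc, e, he, hpe, heq⟩ := hsep p hp q hq hpq'
    exact hr.asymm heq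
      ((hT.rel_iff_of_outDegree_eq hr hc (subset_stage hp) (subset_stage hq) he hpq).1 hpe)
  intro x hxV
  by_contra hne
  have hxU : x ∈ U := by_contra fun h => hne (hfix x hxV h)
  have hgxV : g x ∈ stage U T n := hV ▸ mem_image_of_mem g hxV
  have hgxU : g x ∈ U := by
    by_contra h
    exact hne (g.injective (hfix _ hgxV h))
  rcases hr.total hne with h | h
  · exact hsep' _ hgxU _ hxU (hscore x) h
  · exact hsep' _ hxU _ hgxU (hscore x).symm h

end IsTower

end Tower

namespace IsTournament

variable [DecidableEq X]

theorem exists_isTower (hr : IsTournament r)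
    (hbetween : ∀ p q, r p q → {w | r p w ∧ r w q}.Infinite) (U : Finset X)
    (A : Finset (X × X)) (hA : ∀ a ∈ A, r a.1 a.2) :
    ∃ T n, IsTower r U T n ∧ ∀ a ∈ A, ∃ c < n, ∃ e ∈ T c, r a.1 e ∧ r e a.2 := by
  induction A using Finset.induction_on with
  | empty => exact ⟨fun _ => ∅, 0, ⟨by simp, by simp, by simp, by simp⟩, by simp⟩
  | insert a A _ ih =>
    obtain ⟨T, n, hT, hsep⟩ := ih fun b hb => hA b (mem_insert_of_mem hb)
    obtain ⟨B, hBS, hdisj, hcard, hunsplit, htrans⟩ :=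
      hr.exists_large_transOn_unsplit (hbetween _ _ (hA a (mem_insert_self a A))) (stage U T n)
    obtain ⟨e, he⟩ := card_pos.1 (Nat.zero_lt_of_lt hcard)
    refine ⟨Function.update T n B, n + 1, hT.extend hdisj hcard hunsplit htrans, ?_⟩
    rintro b hb
    rcases mem_insert.1 hb with rfl | hb
    · exact ⟨n, n.lt_succ_self, e, by simpa using he, hBS he⟩
    · obtain ⟨c, hc, e', he', hbe'⟩ := hsep b hb
      exact ⟨c, hc.trans n.lt_succ_self, e', by rwa [Function.update_of_ne hc.ne], hbe'⟩

theorem exists_rigid_superset (hr : IsTournament r)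
    (hbetween : ∀ p q, r p q → {w | r p w ∧ r w q}.Infinite) (U : Finset X) :
    ∃ V : Finset X, U ⊆ V ∧ ∀ g : Equiv.Perm X, (∀ x y, r (g x) (g y) ↔ r x y) →
      V.image g = V → ∀ x ∈ V, g x = x := by
  obtain ⟨T, n, hT, hsep⟩ := hr.exists_isTower hbetween U {a ∈ U ×ˢ U | r a.1 a.2}
    fun a ha => (mem_filter.1 ha).2
  exact ⟨stage U T n, subset_stage, fun g hg hV => hT.apply_eq_self hr
    (fun p hp q hq hpq => hsep (p, q) (by simp [hp, hq, hpq])) hg hV⟩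

end IsTournament

theorem IsTournament.infinite_between [Infinite X] (hr : IsTournament r)
    {G : Subgroup (Equiv.Perm X)} (hinv : ∀ g ∈ G, ∀ x y, r x y ↔ r (g x) (g y))
    (harc : ∀ a b c d, r a b → r c d → ∃ g ∈ G, g a = c ∧ g b = d) {x y : X} (hxy : r x y) :
    {w | r x w ∧ r w y}.Infinite := by
  intro hfin
  obtain ⟨l, hlen, hl, -⟩ := hr.exists_pairwise (hfin.toFinset.card + 3) Set.infinite_univ
  obtain ⟨a, mid, b, rfl⟩ : ∃ a mid b, l = a :: (mid ++ [b]) := by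
    obtain _ | ⟨a, m⟩ := l
    · simp at hlen
    obtain rfl | ⟨mid, b, rfl⟩ := m.eq_nil_or_concat'
    · simp at hlen
    exact ⟨a, mid, b, rfl⟩
  simp only [List.pairwise_cons, List.pairwise_append, List.mem_append, List.mem_singleton] at hl
  obtain ⟨g, hg, rfl, rfl⟩ := harc a b x y (hl.1 b (Or.inr rfl)) hxy
  have hsub : (mid.map g).toFinset ⊆ hfin.toFinset := by
    intro w hw
    obtain ⟨v, hv, rfl⟩ := List.mem_map.1 (List.mem_toFinset.1 hw)
    rw [Set.Finite.mem_toFinset]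
    exact ⟨(hinv g hg _ _).1 (hl.1 v (Or.inl hv)), (hinv g hg _ _).1 (hl.2.2.2 v hv b rfl)⟩
  have hcard := card_le_card hsub
  rw [List.toFinset_card_of_nodup ((hr.nodup_of_pairwise hl.2.1).map g.injective),
    List.length_map] at hcard
  simp at hlen
  omega

section TwoHomogeneous

variable {G : Subgroup (Equiv.Perm X)}

def PairOrbit (G : Subgroup (Equiv.Perm X)) (a b x y : X) : Prop := ∃ g ∈ G, g a = x ∧ g b = y

theorem pairOrbit_iff_apply {a b : X} {g : Equiv.Perm X} (hg : g ∈ G) (x y : X) :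
    PairOrbit G a b x y ↔ PairOrbit G a b (g x) (g y) := by
  refine ⟨fun ⟨k, hk, hx, hy⟩ => ⟨g * k, mul_mem hg hk, by simp [hx], by simp [hy]⟩,
    fun ⟨k, hk, hx, hy⟩ => ⟨g⁻¹ * k, mul_mem (inv_mem hg) hk, ?_, ?_⟩⟩ <;>
  simp [hx, hy]

theorem PairOrbit.exists_apply_eq {a b x y z w : X} :
    PairOrbit G a b x y → PairOrbit G a b z w → ∃ g ∈ G, g x = z ∧ g y = w := by
  rintro ⟨g, hg, rfl, rfl⟩ ⟨k, hk, rfl, rfl⟩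
  exact ⟨k * g⁻¹, mul_mem hk (inv_mem hg), by simp, by simp⟩

variable [DecidableEq X]

theorem exists_mem_apply_eq_or_swap
    (h2hom : ∀ s t : Finset X, s.card = 2 → t.card = 2 → ∃ g ∈ G, s.image g = t)
    {a b x y : X} (hab : a ≠ b) (hxy : x ≠ y) :
    ∃ g ∈ G, (g a = x ∧ g b = y) ∨ (g a = y ∧ g b = x) := by
  obtain ⟨g, hg, himg⟩ := h2hom {a, b} {x, y} (card_pair hab) (card_pair hxy)
  refine ⟨g, hg, Set.pair_eq_pair_iff.1 ?_⟩
  simpa using congrArg ((↑) : Finset X → Set X) himg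

theorem two_transitive_of_swap
    (h2hom : ∀ s t : Finset X, s.card = 2 → t.card = 2 → ∃ g ∈ G, s.image g = t)
    {x y : X} (hxy : x ≠ y) {s : Equiv.Perm X} (hs : s ∈ G) (hsx : s x = y) (hsy : s y = x) :
    ∀ a b c d : X, a ≠ b → c ≠ d → ∃ g ∈ G, g a = c ∧ g b = d := by
  have hfrom : ∀ c d, c ≠ d → ∃ g ∈ G, g x = c ∧ g y = d := by
    intro c d hcd
    obtain ⟨g, hg, h | ⟨h1, h2⟩⟩ := exists_mem_apply_eq_or_swap h2hom hxy hcd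
    · exact ⟨g, hg, h⟩
    · exact ⟨g * s, mul_mem hg hs, by simp [hsx, h2], by simp [hsy, h1]⟩
  intro a b c d hab hcd
  obtain ⟨g, hg, rfl, rfl⟩ := hfrom a b hab
  obtain ⟨k, hk, rfl, rfl⟩ := hfrom c d hcd
  exact ⟨k * g⁻¹, mul_mem hk (inv_mem hg), by simp, by simp⟩

-- Both orientations of an arc in the orbit would give an element of `G` swapping its ends.
theorem isTournament_pairOrbit
    (h2hom : ∀ s t : Finset X, s.card = 2 → t.card = 2 → ∃ g ∈ G, s.image g = t)
    (hnot2t : ¬ ∀ a b c d : X, a ≠ b → c ≠ d → ∃ g ∈ G, g a = c ∧ g b = d)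
    {a b : X} (hab : a ≠ b) : IsTournament (PairOrbit G a b) := by
  refine ⟨fun x ⟨g, _, hx, hy⟩ => hab (g.injective (hx.trans hy.symm)), fun x y hxy =>
    ⟨fun ⟨g, hg, hgx, hgy⟩ ⟨k, hk, hkx, hky⟩ => hnot2t ?_, fun h => ?_⟩⟩
  · exact two_transitive_of_swap h2hom hxy (mul_mem hk (inv_mem hg))
      (by simp [← hgx, hkx]) (by simp [← hgy, hky])
  · obtain ⟨g, hg, h' | h'⟩ := exists_mem_apply_eq_or_swap h2hom hab hxy
    · exact ⟨g, hg, h'⟩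
    · exact absurd ⟨g, hg, h'⟩ h

end TwoHomogeneous

end

/-- a 2-homogeneous not 2-transitive group on infinite X preserves a tournament
    whose arc set is a G-orbit on ordered pairs of distinct elements, and acts locally
    rigidly. -/
theorem stmt18 {X : Type*} [Infinite X] [DecidableEq X] (G : Subgroup (Equiv.Perm X))
    (h2hom : ∀ s t : Finset X, s.card = 2 → t.card = 2 → ∃ g ∈ G, s.image g = t)
    (hnot2t : ¬ ∀ a b c d : X, a ≠ b → c ≠ d → ∃ g ∈ G, g a = c ∧ g b = d) :
    (∃ r : X → X → Prop, IsTournament r ∧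
      (∀ g ∈ G, ∀ x y : X, r x y ↔ r (g x) (g y)) ∧
      ∀ a b c d : X, r a b → r c d → ∃ g ∈ G, g a = c ∧ g b = d) ∧
    (∀ U : Finset X, ∃ V : Finset X, U ⊆ V ∧
      ∀ g ∈ G, V.image g = V → ∀ x ∈ U, g x = x) := by
  obtain ⟨a, b, hab⟩ := exists_pair_ne X
  have hr := isTournament_pairOrbit h2hom hnot2t hab
  have hinv : ∀ g ∈ G, ∀ x y, PairOrbit G a b x y ↔ PairOrbit G a b (g x) (g y) :=
    fun _ hg => pairOrbit_iff_apply hg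
  have harc : ∀ x y z w, PairOrbit G a b x y → PairOrbit G a b z w →
      ∃ g ∈ G, g x = z ∧ g y = w := fun _ _ _ _ => PairOrbit.exists_apply_eq
  refine ⟨⟨PairOrbit G a b, hr, hinv, harc⟩, fun U => ?_⟩
  obtain ⟨V, hUV, hV⟩ := hr.exists_rigid_superset (fun _ _ => hr.infinite_between hinv harc) U
  exact ⟨V, hUV, fun g hg hgV x hx => hV g (fun x y => (hinv g hg x y).symm) hgV x (hUV hx)⟩
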